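/- arXiv:0904.1923 — 3 statements merged into one kernel-verified Lean document; each statement's English description precedes it below -/
import Mathlib

section
/- For every finite simple graph G = (V,E) and every pair of vertices v, w of G, one has G*v*w*v = G*w*v*w (the Seidel complementations are applied left to right). -/
/-!
Away from `v`, passing from `G` to `G*v` toggles the adjacency of `x` and `y` exactly when
`v` is adjacent to one of them but not the other, and it leaves the edges at `v` alone.
Tracking adjacencies through three such steps shows that, for `v ≠ w`, `G*v*w*v` is `G` with
`v` and `w` interchanged, an expression symmetric in `v` and `w`.
-/

universe u

/-- The Seidel complement of `G` at `v`: adjacency between the open neighborhood of `v`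
and the set of vertices different from `v` and not adjacent to `v` is complemented,
all other adjacencies are unchanged. -/
def seidelCompl {V : Type u} (G : SimpleGraph V) (v : V) : SimpleGraph V where
  Adj x y := x ≠ y ∧
    Xor' (G.Adj x y)
      ((G.Adj v x ∧ ¬ G.Adj v y ∧ y ≠ v) ∨ (G.Adj v y ∧ ¬ G.Adj v x ∧ x ≠ v))
  symm := ⟨by
    rintro x y ⟨hxy, h⟩
    refine ⟨hxy.symm, ?_⟩
    have h1 : G.Adj x y ↔ G.Adj y x := G.adj_comm x y
    unfold Xor' at h ⊢
    rw [xor_def] at h ⊢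
    tauto⟩
  loopless := ⟨fun x h => h.1 rfl⟩

namespace SimpleGraph

variable {V : Type u} (G : SimpleGraph V) {v w x y : V}

theorem seidelCompl_adj : (seidelCompl G v).Adj x y ↔ x ≠ y ∧
    Xor (G.Adj x y) ((G.Adj v x ∧ ¬ G.Adj v y ∧ y ≠ v) ∨ (G.Adj v y ∧ ¬ G.Adj v x ∧ x ≠ v)) :=
  Iff.rfl

theorem seidelCompl_adj_of_ne (hx : x ≠ v) (hy : y ≠ v) :
    (seidelCompl G v).Adj x y ↔ (G.Adj x y ↔ (G.Adj v x ↔ G.Adj v y)) := by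
  by_cases hxy : x = y
  · simp [hxy]
  simp only [seidelCompl_adj, xor_def, ne_eq, hxy, hx, hy, not_false_eq_true, and_true, true_and]
  tauto

theorem seidelCompl_adj_self_left : (seidelCompl G v).Adj v x ↔ G.Adj v x := by
  simp only [seidelCompl_adj, xor_def, G.irrefl, ne_eq, not_true_eq_false]
  exact ⟨fun h => by tauto, fun h => ⟨G.ne_of_adj h, by tauto⟩⟩

theorem seidelCompl_adj_self_right : (seidelCompl G v).Adj x v ↔ G.Adj x v := by
  rw [adj_comm, seidelCompl_adj_self_left, adj_comm]

theorem seidelCompl_triple_adj_centers :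
    (seidelCompl (seidelCompl (seidelCompl G v) w) v).Adj v w ↔ G.Adj v w := by
  rw [seidelCompl_adj_self_left, seidelCompl_adj_self_right, seidelCompl_adj_self_left]

theorem seidelCompl_seidelCompl_adj_left (hvw : v ≠ w) (hxv : x ≠ v) (hxw : x ≠ w) :
    (seidelCompl (seidelCompl G v) w).Adj v x ↔ G.Adj w x := by
  rw [seidelCompl_adj_of_ne _ hvw hxw, seidelCompl_adj_self_left, seidelCompl_adj_self_right,
    seidelCompl_adj_of_ne _ hvw.symm hxv, adj_comm G w v]
  tauto

theorem seidelCompl_triple_adj_first (hvw : v ≠ w) (hxv : x ≠ v) (hxw : x ≠ w) :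
    (seidelCompl (seidelCompl (seidelCompl G v) w) v).Adj v x ↔ G.Adj w x := by
  rw [seidelCompl_adj_self_left, seidelCompl_seidelCompl_adj_left G hvw hxv hxw]

theorem seidelCompl_triple_adj_second (hvw : v ≠ w) (hxv : x ≠ v) (hxw : x ≠ w) :
    (seidelCompl (seidelCompl (seidelCompl G v) w) v).Adj w x ↔ G.Adj v x := by
  rw [seidelCompl_adj_of_ne _ hvw.symm hxv, seidelCompl_seidelCompl_adj_left G hvw hxv hxw,
    seidelCompl_adj_self_left (seidelCompl G v), seidelCompl_adj_self_right (seidelCompl G v),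
    seidelCompl_adj_of_ne _ hvw.symm hxv, seidelCompl_adj_self_left]
  tauto

theorem seidelCompl_triple_adj_of_ne (hvw : v ≠ w) (hxv : x ≠ v) (hxw : x ≠ w) (hyv : y ≠ v)
    (hyw : y ≠ w) :
    (seidelCompl (seidelCompl (seidelCompl G v) w) v).Adj x y ↔ G.Adj x y := by
  rw [seidelCompl_adj_of_ne _ hxv hyv, seidelCompl_seidelCompl_adj_left G hvw hxv hxw,
    seidelCompl_seidelCompl_adj_left G hvw hyv hyw, seidelCompl_adj_of_ne _ hxw hyw,
    seidelCompl_adj_of_ne _ hxv hyv, seidelCompl_adj_of_ne _ hvw.symm hxv,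
    seidelCompl_adj_of_ne _ hvw.symm hyv]
  tauto

theorem seidelCompl_seidelCompl_seidelCompl [DecidableEq V] (hvw : v ≠ w) :
    seidelCompl (seidelCompl (seidelCompl G v) w) v = G.comap (Equiv.swap v w) := by
  ext x y
  rw [comap_adj]
  obtain rfl | rfl | ⟨hxv, hxw⟩ : v = x ∨ w = x ∨ (x ≠ v ∧ x ≠ w) := (by tauto) <;>
  obtain rfl | rfl | ⟨hyv, hyw⟩ : v = y ∨ w = y ∨ (y ≠ v ∧ y ≠ w) := (by tauto)
  · simp
  · rw [seidelCompl_triple_adj_centers, Equiv.swap_apply_left, Equiv.swap_apply_right, adj_comm]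
  · rw [seidelCompl_triple_adj_first G hvw hyv hyw, Equiv.swap_apply_left,
      Equiv.swap_apply_of_ne_of_ne hyv hyw]
  · rw [adj_comm, seidelCompl_triple_adj_centers, Equiv.swap_apply_left, Equiv.swap_apply_right]
  · simp
  · rw [seidelCompl_triple_adj_second G hvw hyv hyw, Equiv.swap_apply_right,
      Equiv.swap_apply_of_ne_of_ne hyv hyw]
  · rw [adj_comm, seidelCompl_triple_adj_first G hvw hxv hxw, Equiv.swap_apply_left,
      Equiv.swap_apply_of_ne_of_ne hxv hxw, adj_comm]
  · rw [adj_comm, seidelCompl_triple_adj_second G hvw hxv hxw, Equiv.swap_apply_right,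
      Equiv.swap_apply_of_ne_of_ne hxv hxw, adj_comm]
  · rw [seidelCompl_triple_adj_of_ne G hvw hxv hxw hyv hyw, Equiv.swap_apply_of_ne_of_ne hxv hxw,
      Equiv.swap_apply_of_ne_of_ne hyv hyw]

end SimpleGraph

theorem seidelCompl_triple_comm_general {V : Type u} (G : SimpleGraph V) (v w : V) :
    seidelCompl (seidelCompl (seidelCompl G v) w) v =
      seidelCompl (seidelCompl (seidelCompl G w) v) w := by
  classical
  rcases eq_or_ne v w with rfl | hvw
  · rfl
  rw [G.seidelCompl_seidelCompl_seidelCompl hvw, G.seidelCompl_seidelCompl_seidelCompl hvw.symm,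
    Equiv.swap_comm]

/-- `G*v*w*v = G*w*v*w` for every pair of vertices `v, w`. -/
theorem seidelCompl_triple_comm {V : Type u} [Fintype V] (G : SimpleGraph V) (v w : V) :
    seidelCompl (seidelCompl (seidelCompl G v) w) v =
      seidelCompl (seidelCompl (seidelCompl G w) v) w :=
  seidelCompl_triple_comm_general G v w
end

section
/- Let G = (V,E) be a finite simple graph and v a vertex of G. Then G is prime with respect to modular decomposition if and only if G*v is prime with respect to modular decomposition. -/
/-!
Since `(G*v)*v = G`, it suffices to turn a nontrivial module `M` of `G` into one of `G*v`.
If `v ∉ M`, then `v` sees `M` uniformly, so `M` lies on one side of `N(v)` and stays a module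
of `G*v`. If `v ∈ M`, then `(V ∖ M) ∪ {v}` is a module of `G*v`: every `z ∈ M ∖ {v}` is adjacent
in `G*v` to all of it when `z ∈ N(v)` and to none of it otherwise, because each `m ∉ M` sees
`z` and `v` alike in `G`. This set is nontrivial exactly when `M` is.
-/

universe u

/-- `M` is a module of `G`: every vertex outside `M` is adjacent either to all
vertices of `M` or to none of them. -/
def IsModule {V : Type u} (G : SimpleGraph V) (M : Set V) : Prop :=
  ∀ z ∉ M, (∀ m ∈ M, G.Adj z m) ∨ (∀ m ∈ M, ¬ G.Adj z m)

/-- `G` is prime w.r.t. modular decomposition: every module is trivial. -/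
def IsPrime {V : Type u} (G : SimpleGraph V) : Prop :=
  ∀ M : Set V, IsModule G M → M = ∅ ∨ (∃ x, M = {x}) ∨ M = Set.univ

section

variable {V : Type u} {G : SimpleGraph V} {v : V} {M : Set V}

lemma seidelCompl_adj {x y : V} :
    (seidelCompl G v).Adj x y ↔ x ≠ y ∧ Xor (G.Adj x y)
      ((G.Adj v x ∧ ¬ G.Adj v y ∧ y ≠ v) ∨ (G.Adj v y ∧ ¬ G.Adj v x ∧ x ≠ v)) :=
  Iff.rfl

lemma seidelCompl_adj_left (x : V) : (seidelCompl G v).Adj v x ↔ G.Adj v x := by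
  have := G.ne_of_adj (a := v) (b := x)
  simp only [seidelCompl_adj, xor_def, G.loopless.irrefl v]
  tauto

lemma seidelCompl_adj_of_ne {x y : V} (hx : x ≠ v) (hy : y ≠ v) :
    (seidelCompl G v).Adj x y ↔ (G.Adj x y ↔ (G.Adj v x ↔ G.Adj v y)) := by
  have := G.ne_of_adj (a := x) (b := y)
  rcases eq_or_ne x y with rfl | hxy
  · simp
  · simp only [seidelCompl_adj, xor_def]
    tauto

@[simp]
lemma seidelCompl_seidelCompl : seidelCompl (seidelCompl G v) v = G := by
  ext x y
  rcases eq_or_ne x v with rfl | hx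
  · rw [seidelCompl_adj_left, seidelCompl_adj_left]
  rcases eq_or_ne y v with rfl | hy
  · rw [SimpleGraph.adj_comm, seidelCompl_adj_left, seidelCompl_adj_left, G.adj_comm]
  rw [seidelCompl_adj_of_ne hx hy, seidelCompl_adj_of_ne hx hy, seidelCompl_adj_left,
    seidelCompl_adj_left]
  tauto

lemma isModule_iff :
    IsModule G M ↔ ∀ z ∉ M, ∀ m ∈ M, ∀ m' ∈ M, (G.Adj z m ↔ G.Adj z m') := by
  refine forall₂_congr fun z _ => ⟨?_, fun h => ?_⟩
  · rintro (h | h) m hm m' hm'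
    · exact iff_of_true (h m hm) (h m' hm')
    · exact iff_of_false (h m hm) (h m' hm')
  · by_cases hex : ∃ m ∈ M, G.Adj z m
    · obtain ⟨m, hm, hzm⟩ := hex
      exact Or.inl fun m' hm' => (h m hm m' hm').1 hzm
    · exact Or.inr fun m hm hzm => hex ⟨m, hm, hzm⟩

lemma IsModule.seidelCompl_of_notMem (hM : IsModule G M) (hv : v ∉ M) :
    IsModule (seidelCompl G v) M := by
  rw [isModule_iff] at hM ⊢
  intro z hz m hm m' hm'
  rcases eq_or_ne z v with rfl | hzv
  · rw [seidelCompl_adj_left, seidelCompl_adj_left]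
    exact hM z hz m hm m' hm'
  rw [seidelCompl_adj_of_ne hzv (ne_of_mem_of_not_mem hm hv),
    seidelCompl_adj_of_ne hzv (ne_of_mem_of_not_mem hm' hv), hM z hz m hm m' hm',
    hM v hv m hm m' hm']

lemma IsModule.seidelCompl_insert_compl (hM : IsModule G M) (hv : v ∈ M) :
    IsModule (seidelCompl G v) (insert v Mᶜ) := by
  rw [isModule_iff] at hM ⊢
  intro z hz
  simp only [Set.mem_insert_iff, Set.mem_compl_iff, not_or, not_not] at hz
  obtain ⟨hzv, hzM⟩ := hz
  suffices key : ∀ m ∈ insert v Mᶜ, (seidelCompl G v).Adj z m ↔ G.Adj v z by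
    intro m hm m' hm'
    rw [key m hm, key m' hm']
  rintro m (rfl | hm)
  · rw [SimpleGraph.adj_comm, seidelCompl_adj_left]
  · rw [seidelCompl_adj_of_ne hzv (ne_of_mem_of_not_mem hv hm).symm, G.adj_comm z m,
      G.adj_comm v m, hM m hm z hzM v hv]
    tauto

lemma IsPrime.of_seidelCompl (h : IsPrime (seidelCompl G v)) : IsPrime G := by
  intro M hM
  by_cases hv : v ∉ M
  · exact h M (hM.seidelCompl_of_notMem hv)
  rw [not_not] at hv
  rcases h _ (hM.seidelCompl_insert_compl hv) with hc | ⟨x, hc⟩ | hc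
  · exact absurd hc (Set.insert_nonempty v _).ne_empty
  · have hxv : v = x := hc.le (Set.mem_insert v Mᶜ)
    refine Or.inr (Or.inr (Set.eq_univ_of_forall fun y => by_contra fun hy => hy ?_))
    have hyx : y = x := hc.le (Set.mem_insert_of_mem v hy)
    exact hyx.trans hxv.symm ▸ hv
  · refine Or.inr (Or.inl ⟨v, Set.eq_singleton_iff_unique_mem.2 ⟨hv, fun y hy => ?_⟩⟩)
    have hy' : y ∈ insert v Mᶜ := hc ▸ Set.mem_univ y
    exact hy'.resolve_right (not_not.2 hy)

end

theorem isPrime_seidelCompl_iff_general {V : Type u} (G : SimpleGraph V) (v : V) :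
    IsPrime G ↔ IsPrime (seidelCompl G v) :=
  ⟨fun h => IsPrime.of_seidelCompl (by rwa [seidelCompl_seidelCompl]), IsPrime.of_seidelCompl⟩

/-- `G` is prime w.r.t. modular decomposition iff `G*v` is. -/
theorem isPrime_seidelCompl_iff {V : Type u} [Fintype V] (G : SimpleGraph V) (v : V) :
    IsPrime G ↔ IsPrime (seidelCompl G v) :=
  isPrime_seidelCompl_iff_general G v
end

section
/- Let T be a tournament on a finite vertex set V and let v be a vertex of T. Then T is prime with respect to modular decomposition if and only if the tournament T*v is prime with respect to modular decomposition. -/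
/-!
Away from `v`, the Seidel complement keeps an arc `x → y` exactly when `x` and `y` lie on the same
side of `v`. Hence a module `M` of `T` with `v ∉ M` is still a module of `T*v` (the side of `v` is
constant on `M`), while if `v ∈ M` then `(V ∖ M) ∪ {v}` is a module of `T*v`; both constructions
preserve nontriviality. As `T*v*v = T`, nontrivial modules transfer in both directions.
-/

universe u

/-- `r` is a tournament: irreflexive, and for distinct vertices exactly one of the two
opposite arcs is present. -/
def IsTournament {V : Type u} (r : V → V → Prop) : Prop :=
  (∀ x, ¬ r x x) ∧ ∀ x y : V, x ≠ y → (r x y ↔ ¬ r y x)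

/-- The Seidel complement of a tournament at `v`: every arc between `N⁺(v)` and `N⁻(v)`
is reversed, and every arc incident to `v` is reversed; all other arcs are unchanged. -/
def tournSeidel {V : Type u} (r : V → V → Prop) (v : V) (x y : V) : Prop :=
  ((x = v ∨ y = v ∨ (r v x ∧ r y v) ∨ (r v y ∧ r x v)) ∧ r y x) ∨
  (¬ (x = v ∨ y = v ∨ (r v x ∧ r y v) ∨ (r v y ∧ r x v)) ∧ r x y)

/-- `M` is a module of the tournament `r`. -/
def TournIsModule {V : Type u} (r : V → V → Prop) (M : Set V) : Prop :=
  ∀ z ∉ M, (∀ m ∈ M, r z m) ∨ (∀ m ∈ M, r m z)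

/-- The tournament `r` is prime w.r.t. modular decomposition: every module is trivial. -/
def TournIsPrime {V : Type u} (r : V → V → Prop) : Prop :=
  ∀ M : Set V, TournIsModule r M → M = ∅ ∨ (∃ x, M = {x}) ∨ M = Set.univ

section Tournament

variable {V : Type u} {r : V → V → Prop}

theorem IsTournament.irrefl (hT : IsTournament r) (x : V) : ¬ r x x := hT.1 x

theorem IsTournament.asymm (hT : IsTournament r) {x y : V} (h : r x y) : ¬ r y x := by
  have hxy : x ≠ y := by rintro rfl; exact hT.irrefl x h
  exact (hT.2 x y hxy).mp h

theorem IsTournament.not_rel_iff (hT : IsTournament r) {x y : V} (hxy : x ≠ y) :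
    ¬ r x y ↔ r y x :=
  (hT.2 y x hxy.symm).symm

theorem tournIsPrime_iff_subsingleton :
    TournIsPrime r ↔ ∀ M, TournIsModule r M → M.Subsingleton ∨ M = Set.univ := by
  refine forall₂_congr fun M _ => or_assoc.symm.trans <|
    or_congr_left ⟨?_, Set.Subsingleton.eq_empty_or_singleton⟩
  rintro (rfl | ⟨x, rfl⟩)
  exacts [Set.subsingleton_empty, Set.subsingleton_singleton]

theorem TournIsModule.rel_mem_iff {M : Set V} (hT : IsTournament r) (hM : TournIsModule r M)
    {z m m' : V} (hz : z ∉ M) (hm : m ∈ M) (hm' : m' ∈ M) : r z m ↔ r z m' := by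
  rcases hM z hz with h | h
  · exact iff_of_true (h m hm) (h m' hm')
  · exact iff_of_false (hT.asymm (h m hm)) (hT.asymm (h m' hm'))

theorem TournIsModule.mem_rel_iff {M : Set V} (hT : IsTournament r) (hM : TournIsModule r M)
    {z m m' : V} (hz : z ∉ M) (hm : m ∈ M) (hm' : m' ∈ M) : r m z ↔ r m' z := by
  rcases hM z hz with h | h
  · exact iff_of_false (hT.asymm (h m hm)) (hT.asymm (h m' hm'))
  · exact iff_of_true (h m hm) (h m' hm')

theorem tournIsModule_iff (hT : IsTournament r) {M : Set V} :
    TournIsModule r M ↔ ∀ z ∉ M, ∀ m ∈ M, ∀ m' ∈ M, (r z m ↔ r z m') := by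
  refine ⟨fun hM z hz m hm m' hm' => hM.rel_mem_iff hT hz hm hm', fun h z hz => ?_⟩
  by_cases hout : ∃ m ∈ M, r z m
  · obtain ⟨m, hm, hzm⟩ := hout
    exact .inl fun m' hm' => (h z hz m hm m' hm').mp hzm
  · exact .inr fun m hm => (hT.not_rel_iff (ne_of_mem_of_not_mem hm hz).symm).mp
      fun hzm => hout ⟨m, hm, hzm⟩

end Tournament

section Seidel

variable {V : Type u} {r : V → V → Prop} {v : V}

theorem tournSeidel_left (y : V) : tournSeidel r v v y ↔ r y v := by
  unfold tournSeidel; tauto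

theorem tournSeidel_right (x : V) : tournSeidel r v x v ↔ r v x := by
  unfold tournSeidel; tauto

theorem tournSeidel_of_ne (hT : IsTournament r) {x y : V} (hx : x ≠ v) (hy : y ≠ v) :
    tournSeidel r v x y ↔ (r x y ↔ (r v x ↔ r v y)) := by
  have hvx := hT.not_rel_iff hx.symm
  have hvy := hT.not_rel_iff hy.symm
  obtain rfl | hxy := eq_or_ne x y
  · have := hT.irrefl x
    unfold tournSeidel; tauto
  have hyx := hT.not_rel_iff hxy.symm
  unfold tournSeidel; tauto

theorem isTournament_tournSeidel (hT : IsTournament r) (v : V) :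
    IsTournament (tournSeidel r v) := by
  refine ⟨fun x h => ?_, fun x y hxy => ?_⟩
  · rcases h with ⟨-, h⟩ | ⟨-, h⟩ <;> exact hT.irrefl x h
  obtain rfl | hx := eq_or_ne x v
  · rw [tournSeidel_left, tournSeidel_right]; exact hT.2 y x hxy.symm
  obtain rfl | hy := eq_or_ne y v
  · rw [tournSeidel_left, tournSeidel_right]; exact hT.2 y x hxy.symm
  have hyx := hT.not_rel_iff hxy.symm
  rw [tournSeidel_of_ne hT hx hy, tournSeidel_of_ne hT hy hx]
  tauto

theorem tournSeidel_tournSeidel (hT : IsTournament r) (v : V) :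
    tournSeidel (tournSeidel r v) v = r := by
  funext x y
  apply propext
  obtain rfl | hx := eq_or_ne x v
  · rw [tournSeidel_left, tournSeidel_right]
  obtain rfl | hy := eq_or_ne y v
  · rw [tournSeidel_right, tournSeidel_left]
  have hvx := hT.not_rel_iff hx.symm
  have hvy := hT.not_rel_iff hy.symm
  rw [tournSeidel_of_ne (isTournament_tournSeidel hT v) hx hy, tournSeidel_of_ne hT hx hy,
    tournSeidel_left, tournSeidel_left]
  tauto

theorem TournIsModule.tournSeidel_of_not_mem (hT : IsTournament r) {M : Set V}
    (hM : TournIsModule r M) (hv : v ∉ M) : TournIsModule (tournSeidel r v) M := by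
  rw [tournIsModule_iff (isTournament_tournSeidel hT v)]
  intro z hz m hm m' hm'
  obtain rfl | hzv := eq_or_ne z v
  · rw [tournSeidel_left, tournSeidel_left]
    exact hM.mem_rel_iff hT hz hm hm'
  rw [tournSeidel_of_ne hT hzv (ne_of_mem_of_not_mem hm hv),
    tournSeidel_of_ne hT hzv (ne_of_mem_of_not_mem hm' hv),
    hM.rel_mem_iff hT hz hm hm', hM.rel_mem_iff hT hv hm hm']

theorem TournIsModule.tournSeidel_insert_compl (hT : IsTournament r) {M : Set V}
    (hM : TournIsModule r M) (hv : v ∈ M) : TournIsModule (tournSeidel r v) (insert v Mᶜ) := by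
  rw [tournIsModule_iff (isTournament_tournSeidel hT v)]
  intro z hz
  obtain ⟨hzv, hzM⟩ : z ≠ v ∧ z ∈ M := by simpa using hz
  have key : ∀ n ∈ insert v Mᶜ, tournSeidel r v z n ↔ r v z := by
    rintro n (rfl | hn)
    · exact tournSeidel_right z
    rw [tournSeidel_of_ne hT hzv (ne_of_mem_of_not_mem hv hn).symm,
      hM.mem_rel_iff hT hn hzM hv]
    tauto
  exact fun m hm m' hm' => (key m hm).trans (key m' hm').symm

theorem TournIsModule.exists_nontrivial_tournSeidel (hT : IsTournament r) {M : Set V}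
    (hM : TournIsModule r M) (hM₁ : M.Nontrivial) (hM₂ : M ≠ Set.univ) :
    ∃ N, TournIsModule (tournSeidel r v) N ∧ N.Nontrivial ∧ N ≠ Set.univ := by
  by_cases hv : v ∈ M
  · refine ⟨insert v Mᶜ, hM.tournSeidel_insert_compl hT hv, ?_, ?_⟩
    · obtain ⟨w, hw⟩ := (Set.ne_univ_iff_exists_notMem M).mp hM₂
      exact ⟨v, Set.mem_insert v _, w, Set.mem_insert_of_mem v hw, ne_of_mem_of_not_mem hv hw⟩
    · obtain ⟨c, hc, hcv⟩ := hM₁.exists_ne v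
      exact (Set.ne_univ_iff_exists_notMem _).mpr ⟨c, by simp [hc, hcv]⟩
  · exact ⟨M, hM.tournSeidel_of_not_mem hT hv, hM₁, hM₂⟩

theorem TournIsPrime.of_tournSeidel (hT : IsTournament r) (h : TournIsPrime (tournSeidel r v)) :
    TournIsPrime r := by
  rw [tournIsPrime_iff_subsingleton] at h ⊢
  intro M hM
  by_contra! ⟨hM₁, hM₂⟩
  obtain ⟨N, hN, hN₁, hN₂⟩ := hM.exists_nontrivial_tournSeidel (v := v) hT hM₁ hM₂
  exact (h N hN).elim hN₁.not_subsingleton hN₂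

end Seidel

theorem tournament_isPrime_seidel_iff_general {V : Type u} (r : V → V → Prop)
    (hT : IsTournament r) (v : V) :
    TournIsPrime r ↔ TournIsPrime (tournSeidel r v) := by
  refine ⟨fun h => .of_tournSeidel (isTournament_tournSeidel hT v) (v := v) ?_, .of_tournSeidel hT⟩
  rwa [tournSeidel_tournSeidel hT v]

/-- A tournament `T` is prime w.r.t. modular decomposition iff `T*v` is. -/
theorem tournament_isPrime_seidel_iff {V : Type u} [Fintype V] (r : V → V → Prop)
    (hT : IsTournament r) (v : V) :
    TournIsPrime r ↔ TournIsPrime (tournSeidel r v) :=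
  tournament_isPrime_seidel_iff_general r hT v
end
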